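/- arXiv:2510.14555 — 4 statements merged into one kernel-verified Lean document; each statement's English description precedes it below -/
import Mathlib

section
/- The nominal value function is monotone with respect to coalition inclusion: for all coalitions R ⊆ S ⊆ N, one has v(R) ≤ v(S). -/
open Finset

/-- Feasible value set `F(S)` of a coalition `S`: all values
`∑ t, ∑ i ∈ S, u i t (h (i,t)) − Cost C` for feasible `(C, h)`. -/
def feasibleSet {N T : Type*} [Fintype T] (u : N → T → ℝ → ℝ) (Cost : ℝ → ℝ)
    (S : Finset N) : Set ℝ :=
  { x | ∃ (C : ℝ) (h : N × T → ℝ), 0 ≤ C ∧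
      (∀ i ∈ S, ∀ t : T, 0 ≤ h (i, t)) ∧
      (∀ t : T, (∑ i ∈ S, h (i, t)) ≤ C) ∧
      x = (∑ t : T, ∑ i ∈ S, u i t (h (i, t))) - Cost C }

/-- The nominal value function: `v S = sSup (F S)` if the infrastructure provider `i0`
belongs to `S`, and `0` otherwise. -/
noncomputable def nominalValue {N T : Type*} [Fintype T] [DecidableEq N]
    (i0 : N) (u : N → T → ℝ → ℝ) (Cost : ℝ → ℝ) (S : Finset N) : ℝ :=
  if i0 ∈ S then sSup (feasibleSet u Cost S) else 0

section

variable {N T : Type*} [Fintype T] {u : N → T → ℝ → ℝ} {Cost : ℝ → ℝ}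

lemma zero_mem_feasibleSet (hu0 : ∀ i t, u i t 0 = 0) (hCost0 : Cost 0 = 0) (S : Finset N) :
    (0 : ℝ) ∈ feasibleSet u Cost S :=
  ⟨0, fun _ => 0, le_rfl, fun _ _ _ => le_rfl, fun _ => by simp, by simp [hu0, hCost0]⟩

/-- A plan of `R` is a plan of any `S ⊇ R` in which the members of `S \ R` are allotted nothing. -/
lemma feasibleSet_mono [DecidableEq N] (hu0 : ∀ i t, u i t 0 = 0) {R S : Finset N}
    (hRS : R ⊆ S) : feasibleSet u Cost R ⊆ feasibleSet u Cost S := by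
  rintro _ ⟨C, h, hC, h_nonneg, h_cap, rfl⟩
  have sum_extend : ∀ a : N → ℝ, ∑ i ∈ S, (if i ∈ R then a i else 0) = ∑ i ∈ R, a i := fun a => by
    rw [sum_ite_mem, inter_eq_right.mpr hRS]
  refine ⟨C, fun p => if p.1 ∈ R then h p else 0, hC, ?_, fun t => ?_, ?_⟩
  · intro i _ t
    dsimp only
    split_ifs with hi
    exacts [h_nonneg i hi t, le_rfl]
  · simpa only [sum_extend] using h_cap t
  · simp only [apply_ite (u _ _), hu0, sum_extend]

lemma nominalValue_mono [DecidableEq N] (i0 : N) (hu0 : ∀ i t, u i t 0 = 0)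
    (hCost0 : Cost 0 = 0) {R S : Finset N} (hS : BddAbove (feasibleSet u Cost S))
    (hRS : R ⊆ S) : nominalValue i0 u Cost R ≤ nominalValue i0 u Cost S := by
  have hzero := zero_mem_feasibleSet hu0 hCost0 (u := u)
  unfold nominalValue
  by_cases hR : i0 ∈ R
  · rw [if_pos hR, if_pos (hRS hR)]
    exact csSup_le_csSup hS ⟨0, hzero R⟩ (feasibleSet_mono hu0 hRS)
  · rw [if_neg hR]
    split_ifs
    exacts [le_csSup hS (hzero S), le_rfl]

end

theorem stmt2_general {N T : Type*} [Fintype T] [DecidableEq N]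
    (i0 : N) (u : N → T → ℝ → ℝ) (Cost : ℝ → ℝ)
    (hu0 : ∀ i t, u i t 0 = 0)
    (hCost0 : Cost 0 = 0)
    (hbdd : ∀ S : Finset N, BddAbove (feasibleSet u Cost S)) :
    ∀ R S : Finset N, R ⊆ S →
      nominalValue i0 u Cost R ≤ nominalValue i0 u Cost S :=
  fun _ S => nominalValue_mono i0 hu0 hCost0 (hbdd S)

/-- The nominal value function is monotone with respect to coalition
inclusion: for all coalitions `R ⊆ S ⊆ N`, one has `v(R) ≤ v(S)`. -/
theorem stmt2 {N T : Type*} [Fintype N] [Fintype T] [Nonempty T] [DecidableEq N]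
    (i0 : N) (u : N → T → ℝ → ℝ) (Cost : ℝ → ℝ)
    (hu0 : ∀ i t, u i t 0 = 0)
    (hupos : ∀ i t x, (0 : ℝ) ≤ x → 0 ≤ u i t x)
    (hCost0 : Cost 0 = 0)
    (hbdd : ∀ S : Finset N, BddAbove (feasibleSet u Cost S)) :
    ∀ R S : Finset N, R ⊆ S →
      nominalValue i0 u Cost R ≤ nominalValue i0 u Cost S :=
  stmt2_general i0 u Cost hu0 hCost0 hbdd
end

section
/- Let N be a finite set with |N| ≥ 2, let v assign a real number to each subset of N, and let V = v(N) > 0. For σ > 0 define D(σ) as the maximum over all nonempty proper subsets S ⊊ N of the quantity |S| + (|N| − 2|S|)·(v(S) + σ)/V, and define δ(σ) = min( V/|N| , σ / D(σ) ). Assume that for every nonempty proper subset S ⊊ N one has |S|·V + (|N| − 2|S|)·v(S) ≥ 0, and that 0 < σ̂ ≤ σ with D(σ) > 0. Then D(σ̂) > 0 and δ(σ̂) ≤ δ(σ); in particular the threshold computed from the smaller stability value σ̂ is tighter than (at most equal to) the one computed from the larger stability value σ. -/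
open Finset

/-!
Writing `V = v N` and `n = |N|`, each quantity maximised in `D s` is affine in `s`,
`|S| + (n - 2|S|)(v S + s)/V = a_S + b_S s` with `a_S = (|S| V + (n - 2|S|) v S)/V ≥ 0`.
Hence `(a_S + b_S s)/s = a_S/s + b_S` is antitone in `s > 0`, and so is its maximum `D s / s`.
For `σ̂ ≤ σ` this gives `D σ / σ ≤ D σ̂ / σ̂`, i.e. both `D σ̂ > 0` and `σ̂ / D σ̂ ≤ σ / D σ`.
-/

theorem sSup_image_affine_mul_le {ι : Type*} {T : Set ι} (hT : T.Finite) (hne : T.Nonempty)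
    {a b : ι → ℝ} (ha : ∀ i ∈ T, 0 ≤ a i) {s t : ℝ} (hs : 0 < s) (hst : s ≤ t) :
    sSup ((fun i => a i + b i * t) '' T) * s ≤ sSup ((fun i => a i + b i * s) '' T) * t := by
  rw [← le_div_iff₀ hs]
  refine csSup_le (hne.image _) ?_
  rintro _ ⟨i, hi, rfl⟩
  have hpoint : (a i + b i * t) * s ≤ (a i + b i * s) * t := by
    nlinarith [mul_le_mul_of_nonneg_left hst (ha i hi)]
  rw [le_div_iff₀ hs]
  exact hpoint.trans <| mul_le_mul_of_nonneg_right
    (le_csSup (hT.image _).bddAbove (Set.mem_image_of_mem _ hi)) (hs.le.trans hst)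

theorem stmt5_general {N : Type*} [Fintype N]
    (v : Finset N → ℝ) (hV : 0 < v Finset.univ)
    (D : ℝ → ℝ)
    (hD : ∀ s : ℝ, D s = sSup {x : ℝ | ∃ S : Finset N, S.Nonempty ∧ S ≠ Finset.univ ∧
        x = (S.card : ℝ) +
          ((Fintype.card N : ℝ) - 2 * S.card) * (v S + s) / v Finset.univ})
    (hnn : ∀ S : Finset N, S.Nonempty → S ≠ Finset.univ →
        0 ≤ (S.card : ℝ) * v Finset.univ +
          ((Fintype.card N : ℝ) - 2 * S.card) * v S)
    (σhat σ : ℝ) (h0 : 0 < σhat) (hle : σhat ≤ σ) (hDσ : 0 < D σ) :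
    0 < D σhat ∧
      min (v Finset.univ / (Fintype.card N : ℝ)) (σhat / D σhat) ≤
        min (v Finset.univ / (Fintype.card N : ℝ)) (σ / D σ) := by
  set V := v Finset.univ
  set n : ℝ := (Fintype.card N : ℝ)
  set T : Set (Finset N) := {S | S.Nonempty ∧ S ≠ Finset.univ}
  set a : Finset N → ℝ := fun S => ((S.card : ℝ) * V + (n - 2 * S.card) * v S) / V
  set b : Finset N → ℝ := fun S => (n - 2 * S.card) / V
  have hD_affine : ∀ s, D s = sSup ((fun S => a S + b S * s) '' T) := by
    intro s
    rw [hD s]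
    congr 1
    ext x
    simp only [Set.mem_ofPred_eq, Set.mem_image, T, a, b, and_assoc]
    refine exists_congr fun S => and_congr_right fun _ => and_congr_right fun _ => ?_
    rw [eq_comm]
    field_simp
    ring_nf
  -- `sSup ∅ = 0` in `ℝ`, so `0 < D σ` is what guarantees a nonempty proper coalition.
  have hT : T.Nonempty := by
    refine (Set.nonempty_iff_ne_empty.2 fun hempty => ?_).of_image (f := fun S => a S + b S * σ)
    rw [hD_affine, hempty, Real.sSup_empty] at hDσ
    exact hDσ.false
  have hmono : D σ * σhat ≤ D σhat * σ := by
    rw [hD_affine, hD_affine]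
    exact sSup_image_affine_mul_le (Set.toFinite T) hT
      (fun S hS => div_nonneg (hnn S hS.1 hS.2) hV.le) h0 hle
  have hDσhat : 0 < D σhat := by nlinarith
  refine ⟨hDσhat, min_le_min_left _ ?_⟩
  rw [div_le_div_iff₀ hDσhat hDσ]
  linarith

/-- Let `N` be finite with `|N| ≥ 2`, `v` a value function on subsets of
`N` with `V = v(univ) > 0`. For `σ > 0` let
`D σ = max_{∅ ≠ S ⊊ N} (|S| + (|N| − 2|S|)·(v S + σ)/V)` and
`δ σ = min (V/|N|) (σ / D σ)`. If `|S|·V + (|N| − 2|S|)·v S ≥ 0` for every nonempty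
proper `S`, and `0 < σ̂ ≤ σ` with `D σ > 0`, then `D σ̂ > 0` and `δ σ̂ ≤ δ σ`. -/
theorem stmt5 {N : Type*} [Fintype N] [DecidableEq N]
    (hcard : 2 ≤ Fintype.card N)
    (v : Finset N → ℝ) (hV : 0 < v Finset.univ)
    (D : ℝ → ℝ)
    (hD : ∀ s : ℝ, D s = sSup {x : ℝ | ∃ S : Finset N, S.Nonempty ∧ S ≠ Finset.univ ∧
        x = (S.card : ℝ) +
          ((Fintype.card N : ℝ) - 2 * S.card) * (v S + s) / v Finset.univ})
    (hnn : ∀ S : Finset N, S.Nonempty → S ≠ Finset.univ →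
        0 ≤ (S.card : ℝ) * v Finset.univ +
          ((Fintype.card N : ℝ) - 2 * S.card) * v S)
    (σhat σ : ℝ) (h0 : 0 < σhat) (hle : σhat ≤ σ) (hDσ : 0 < D σ) :
    0 < D σhat ∧
      min (v Finset.univ / (Fintype.card N : ℝ)) (σhat / D σhat) ≤
        min (v Finset.univ / (Fintype.card N : ℝ)) (σ / D σ) :=
  stmt5_general v hV D hD hnn σhat σ h0 hle hDσ
end

section
/- Let P be a nonempty finite set with n = |P|, let ξ > 0, let w : P → ℝ with w_i > 0 for every i ∈ P, and let C ∈ ℝ. Define G = (∏_{j ∈ P} w_j)^{1/n} and h*_i = C/n + (1/ξ)·ln(w_i / G) for each i ∈ P. Then ∑_{i ∈ P} h*_i = C, and for every h : P → ℝ with ∑_{i ∈ P} h_i ≤ C one has ∑_{i ∈ P} w_i·(1 − exp(−ξ·h_i)) ≤ ∑_{i ∈ P} w_i·(1 − exp(−ξ·h*_i)); that is, the allocation h* maximizes the total utility subject to the capacity constraint ∑_i h_i ≤ C. -/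
open Finset Real

/-!
The first-order condition of the concave problem is that the marginal utilities
`ξ · w i · exp (-ξ · h i)` are all equal, and the logarithmic formula for `h*` is exactly
what makes `w i · exp (-ξ · h* i)` independent of `i`; the geometric mean is chosen so that
the logarithms sum to zero, which gives `∑ h* = C`. Optimality then follows from the tangent
line bound `exp t ≥ 1 + t`, summed with these equal weights.
-/

theorem sum_log_div_geomMean {ι : Type*} [Fintype ι] [Nonempty ι] {w : ι → ℝ}
    (hw : ∀ i, 0 < w i) :
    ∑ i, log (w i / (∏ j, w j) ^ ((1 : ℝ) / (Fintype.card ι : ℝ))) = 0 := by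
  have hprod : 0 < ∏ j, w j := prod_pos fun i _ => hw i
  have hcard : (Fintype.card ι : ℝ) ≠ 0 := Nat.cast_ne_zero.mpr Fintype.card_ne_zero
  simp only [log_div (hw _).ne' (rpow_pos_of_pos hprod _).ne', sum_sub_distrib, sum_const,
    card_univ, nsmul_eq_mul, log_rpow hprod, ← log_prod fun i _ => (hw i).ne']
  field_simp
  ring

theorem sum_mul_exp_le_of_mul_exp_eq {ι : Type*} {s : Finset ι} {w x y : ι → ℝ} {K : ℝ}
    (hK : ∀ i ∈ s, w i * exp (x i) = K) (hK0 : 0 ≤ K) (hxy : ∑ i ∈ s, x i ≤ ∑ i ∈ s, y i) :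
    ∑ i ∈ s, w i * exp (x i) ≤ ∑ i ∈ s, w i * exp (y i) := by
  have tangent : ∀ i ∈ s, K * (1 + (y i - x i)) ≤ w i * exp (y i) := by
    intro i hi
    calc K * (1 + (y i - x i)) ≤ K * exp (y i - x i) := by
          gcongr; linarith [add_one_le_exp (y i - x i)]
      _ = w i * exp (y i) := by rw [← hK i hi, mul_assoc, ← exp_add, add_sub_cancel]
  calc ∑ i ∈ s, w i * exp (x i) = ∑ i ∈ s, K := sum_congr rfl hK
    _ ≤ ∑ i ∈ s, K * (1 + (y i - x i)) := by
        simp only [mul_add, mul_one, sum_add_distrib, ← mul_sum, sum_sub_distrib]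
        nlinarith
    _ ≤ ∑ i ∈ s, w i * exp (y i) := sum_le_sum tangent

theorem mul_exp_neg_mul_add_log_div {ξ w G : ℝ} (hξ : ξ ≠ 0) (hw : 0 < w) (hG : 0 < G)
    (c : ℝ) : w * exp (-ξ * (c + 1 / ξ * log (w / G))) = G * exp (-ξ * c) := by
  have hexponent : -ξ * (c + 1 / ξ * log (w / G)) = -ξ * c + -log (w / G) := by
    field_simp
    ring
  rw [hexponent, exp_add, exp_neg, exp_log (div_pos hw hG), inv_div]
  field_simp

/-- Let `P` be a nonempty finite set with `n = |P|`, `ξ > 0`,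
`w : P → ℝ` with `w i > 0`, and `C ∈ ℝ`. With `G = (∏ j, w j)^(1/n)` and
`h* i = C/n + (1/ξ)·ln(w i / G)`, one has `∑ i, h* i = C`, and `h*` maximizes
`∑ i, w i·(1 − exp(−ξ·h i))` over all `h` with `∑ i, h i ≤ C`. -/
theorem stmt12 {P : Type*} [Fintype P] [Nonempty P]
    (ξ : ℝ) (hξ : 0 < ξ) (w : P → ℝ) (hw : ∀ i, 0 < w i) (C : ℝ)
    (hstar : P → ℝ)
    (hdef : ∀ i : P, hstar i = C / (Fintype.card P : ℝ) +
      (1 / ξ) * Real.log (w i / (∏ j : P, w j) ^ ((1 : ℝ) / (Fintype.card P : ℝ)))) :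
    (∑ i : P, hstar i) = C ∧
    ∀ h : P → ℝ, (∑ i : P, h i) ≤ C →
      (∑ i : P, w i * (1 - Real.exp (-ξ * h i))) ≤
        ∑ i : P, w i * (1 - Real.exp (-ξ * hstar i)) := by
  have hlog := sum_log_div_geomMean hw
  set G := (∏ j, w j) ^ ((1 : ℝ) / (Fintype.card P : ℝ))
  have hG : 0 < G := rpow_pos_of_pos (prod_pos fun i _ => hw i) _
  have hsum : ∑ i, hstar i = C := by
    simp only [hdef, sum_add_distrib, ← mul_sum, hlog, sum_const,
      card_univ, nsmul_eq_mul, mul_zero, add_zero]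
    field_simp
  refine ⟨hsum, fun h hh => ?_⟩
  have hexp : ∑ i, w i * exp (-ξ * hstar i) ≤ ∑ i, w i * exp (-ξ * h i) := by
    refine sum_mul_exp_le_of_mul_exp_eq (K := G * exp (-ξ * (C / Fintype.card P)))
      (fun i _ => ?_) (by positivity) ?_
    · rw [hdef i, mul_exp_neg_mul_add_log_div hξ.ne' (hw i) hG]
    · simp only [← mul_sum, hsum]
      nlinarith
  simp only [mul_sub, mul_one, sum_sub_distrib]
  linarith
end

section
/- Let P be a nonempty finite set with n = |P|, T a nonempty finite set, ξ > 0, B > 0, β : P → ℝ with β_j > 0, and l : P × T → ℝ with l_{j,t} > 0. Define C*(β, l) = (n/ξ)·ln( ( ∑_{t′ ∈ T} (∏_{j ∈ P} ξ·β_j·l_{j,t′})^{1/n} ) / B ) and, for i ∈ P and t ∈ T, h*_{i,t}(β, l) = C*(β, l)/n + (1/ξ)·ln( β_i·l_{i,t} / (∏_{j ∈ P} β_j·l_{j,t})^{1/n} ). Then, with all other parameters fixed, the map sending β_i ∈ (0, ∞) to h*_{i,t}(β, l) is strictly increasing, and the map sending l_{i,t} ∈ (0, ∞) to h*_{i,t}(β,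 l) is strictly increasing. -/
open Finset

/-- Optimal installed capacity from the closed-form KKT solution:
`C*(β, l) = (n/ξ)·ln((∑ t', (∏ j, ξ·β j·l j t')^(1/n)) / B)`. -/
noncomputable def Cstar {P T : Type*} [Fintype P] [Fintype T]
    (ξ B : ℝ) (β : P → ℝ) (l : P → T → ℝ) : ℝ :=
  ((Fintype.card P : ℝ) / ξ) *
    Real.log ((∑ t' : T, (∏ j : P, ξ * β j * l j t') ^
      ((1 : ℝ) / (Fintype.card P : ℝ))) / B)

/-- Optimal resource share of provider `i` at slot `t` from the closed-form KKT
solution: `h* i t = C*/n + (1/ξ)·ln(β i·l i t / (∏ j, β j·l j t)^(1/n))`. -/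
noncomputable def hstar {P T : Type*} [Fintype P] [Fintype T]
    (ξ B : ℝ) (β : P → ℝ) (l : P → T → ℝ) (i : P) (t : T) : ℝ :=
  Cstar ξ B β l / (Fintype.card P : ℝ) +
    (1 / ξ) * Real.log (β i * l i t / (∏ j : P, β j * l j t) ^
      ((1 : ℝ) / (Fintype.card P : ℝ)))

/-!
Both perturbations only enlarge the weights `β j * l j t'`, and strictly enlarge the weight of
`i` at slot `t`. The capacity term `C*` is built from these weights by products, positive
powers, a sum and a logarithm, so it strictly increases. In the second term the exponent of
`β i * l i t` is `1 - 1/n ≥ 0` once the geometric mean is expanded, so it does not decrease.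
-/

theorem Cstar_lt_Cstar {P T : Type*} [Fintype P] [Fintype T] {ξ B : ℝ} (hξ : 0 < ξ)
    (hB : 0 < B) {β β' : P → ℝ} {l l' : P → T → ℝ} (hpos : ∀ j t', 0 < β j * l j t')
    (hle : ∀ j t', β j * l j t' ≤ β' j * l' j t') {i : P} {t : T}
    (hlt : β i * l i t < β' i * l' i t) :
    Cstar ξ B β l < Cstar ξ B β' l' := by
  have hn : 0 < (Fintype.card P : ℝ) := Nat.cast_pos.2 (Fintype.card_pos_iff.2 ⟨i⟩)
  have hfactor_pos : ∀ j t', 0 < ξ * β j * l j t' := fun j t' => by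
    simpa only [mul_assoc] using mul_pos hξ (hpos j t')
  have hfactor_le : ∀ j t', ξ * β j * l j t' ≤ ξ * β' j * l' j t' := fun j t' => by
    simpa only [mul_assoc] using mul_le_mul_of_nonneg_left (hle j t') hξ.le
  have hprod_le : ∀ t', ∏ j, ξ * β j * l j t' ≤ ∏ j, ξ * β' j * l' j t' := fun t' =>
    prod_le_prod (fun j _ => (hfactor_pos j t').le) (fun j _ => hfactor_le j t')
  have hprod_lt : ∏ j, ξ * β j * l j t < ∏ j, ξ * β' j * l' j t :=
    prod_lt_prod (fun j _ => hfactor_pos j t) (fun j _ => hfactor_le j t)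
      ⟨i, mem_univ i, by simpa only [mul_assoc] using mul_lt_mul_of_pos_left hlt hξ⟩
  have hexp : (0 : ℝ) < 1 / Fintype.card P := by positivity
  have hsum_pos : 0 < ∑ t', (∏ j, ξ * β j * l j t') ^ ((1 : ℝ) / Fintype.card P) :=
    sum_pos (fun t' _ => Real.rpow_pos_of_pos (prod_pos fun j _ => hfactor_pos j t') _)
      ⟨t, mem_univ t⟩
  have hsum_lt : ∑ t', (∏ j, ξ * β j * l j t') ^ ((1 : ℝ) / Fintype.card P) <
      ∑ t', (∏ j, ξ * β' j * l' j t') ^ ((1 : ℝ) / Fintype.card P) :=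
    sum_lt_sum
      (fun t' _ => Real.rpow_le_rpow (prod_pos fun j _ => hfactor_pos j t').le (hprod_le t')
        hexp.le)
      ⟨t, mem_univ t, Real.rpow_lt_rpow (prod_pos fun j _ => hfactor_pos j t).le hprod_lt hexp⟩
  unfold Cstar
  gcongr

theorem log_div_rpow_prod {ι : Type*} [Fintype ι] {u : ι → ℝ} (hu : ∀ j, 0 < u j) (i : ι) :
    Real.log (u i / (∏ j, u j) ^ ((1 : ℝ) / Fintype.card ι)) =
      Real.log (u i) - 1 / Fintype.card ι * ∑ j, Real.log (u j) := by
  have hprod : 0 < ∏ j, u j := prod_pos fun j _ => hu j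
  rw [Real.log_div (hu i).ne' (Real.rpow_pos_of_pos hprod _).ne', Real.log_rpow hprod,
    Real.log_prod fun j _ => (hu j).ne']

theorem log_div_rpow_prod_le {ι : Type*} [Fintype ι] {u u' : ι → ℝ} (hu : ∀ j, 0 < u j)
    (hu' : ∀ j, 0 < u' j) {i : ι} (hle : u i ≤ u' i) (heq : ∀ j ≠ i, u' j = u j) :
    Real.log (u i / (∏ j, u j) ^ ((1 : ℝ) / Fintype.card ι)) ≤
      Real.log (u' i / (∏ j, u' j) ^ ((1 : ℝ) / Fintype.card ι)) := by
  have hn : (1 : ℝ) ≤ Fintype.card ι := Nat.one_le_cast.2 (Fintype.card_pos_iff.2 ⟨i⟩)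
  have hsum : ∑ j, Real.log (u' j) - ∑ j, Real.log (u j) = Real.log (u' i) - Real.log (u i) := by
    rw [← sum_sub_distrib]
    exact sum_eq_single i (fun j _ hj => by rw [heq j hj, sub_self])
      (fun h => absurd (mem_univ i) h)
  have hlog : Real.log (u i) ≤ Real.log (u' i) := Real.log_le_log (hu i) hle
  have hcoef : 1 / (Fintype.card ι : ℝ) ≤ 1 := (div_le_one (by linarith)).2 hn
  rw [log_div_rpow_prod hu, log_div_rpow_prod hu']
  nlinarith

theorem hstar_lt_hstar {P T : Type*} [Fintype P] [Fintype T] {ξ B : ℝ} (hξ : 0 < ξ)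
    (hB : 0 < B) {β β' : P → ℝ} {l l' : P → T → ℝ} (hpos : ∀ j t', 0 < β j * l j t')
    (hle : ∀ j t', β j * l j t' ≤ β' j * l' j t') {i : P} {t : T}
    (hlt : β i * l i t < β' i * l' i t) (heq : ∀ j ≠ i, β' j * l' j t = β j * l j t) :
    hstar ξ B β l i t < hstar ξ B β' l' i t := by
  have hn : 0 < (Fintype.card P : ℝ) := Nat.cast_pos.2 (Fintype.card_pos_iff.2 ⟨i⟩)
  have hcap := Cstar_lt_Cstar hξ hB hpos hle hlt
  have hshare := log_div_rpow_prod_le (fun j => hpos j t)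
    (fun j => (hpos j t).trans_le (hle j t)) hlt.le heq
  unfold hstar
  exact add_lt_add_of_lt_of_le (div_lt_div_of_pos_right hcap hn)
    (mul_le_mul_of_nonneg_left hshare (by positivity))

theorem stmt14_general {P T : Type*} [Fintype P] [Fintype T]
    [DecidableEq P] [DecidableEq T]
    (ξ B : ℝ) (hξ : 0 < ξ) (hB : 0 < B)
    (β : P → ℝ) (hβ : ∀ j, 0 < β j)
    (l : P → T → ℝ) (hl : ∀ j t, 0 < l j t)
    (i : P) (t : T) :
    StrictMonoOn (fun b : ℝ => hstar ξ B (Function.update β i b) l i t)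
      (Set.Ioi (0 : ℝ)) ∧
    StrictMonoOn (fun x : ℝ => hstar ξ B β
      (fun j t' => if j = i ∧ t' = t then x else l j t') i t)
      (Set.Ioi (0 : ℝ)) := by
  constructor
  · intro a ha b _ hab
    refine hstar_lt_hstar hξ hB (fun j t' => ?_) (fun j t' => ?_) ?_ (fun j hj => ?_)
    · rcases eq_or_ne j i with rfl | hj
      · simpa using mul_pos (Set.mem_Ioi.1 ha) (hl j t')
      · simpa [hj] using mul_pos (hβ j) (hl j t')
    · rcases eq_or_ne j i with rfl | hj
      · simpa using mul_le_mul_of_nonneg_right hab.le (hl j t').le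
      · simp [hj]
    · simpa using mul_lt_mul_of_pos_right hab (hl i t)
    · simp [hj]
  · intro a ha b _ hab
    refine hstar_lt_hstar hξ hB (fun j t' => ?_) (fun j t' => ?_) ?_ (fun j hj => ?_)
    · split_ifs
      exacts [mul_pos (hβ j) ha, mul_pos (hβ j) (hl j t')]
    · split_ifs
      exacts [mul_le_mul_of_nonneg_left hab.le (hβ j).le, le_rfl]
    · simpa using mul_lt_mul_of_pos_left hab (hβ i)
    · simp [hj]

/-- With all other parameters fixed (and all parameters strictly
positive), the optimal share `h* i t` is strictly increasing in the benefit factor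
`β i` on `(0, ∞)`, and strictly increasing in the expected load `l i t` on `(0, ∞)`. -/
theorem stmt14 {P T : Type*} [Fintype P] [Fintype T] [Nonempty P] [Nonempty T]
    [DecidableEq P] [DecidableEq T]
    (ξ B : ℝ) (hξ : 0 < ξ) (hB : 0 < B)
    (β : P → ℝ) (hβ : ∀ j, 0 < β j)
    (l : P → T → ℝ) (hl : ∀ j t, 0 < l j t)
    (i : P) (t : T) :
    StrictMonoOn (fun b : ℝ => hstar ξ B (Function.update β i b) l i t)
      (Set.Ioi (0 : ℝ)) ∧
    StrictMonoOn (fun x : ℝ => hstar ξ B β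
      (fun j t' => if j = i ∧ t' = t then x else l j t') i t)
      (Set.Ioi (0 : ℝ)) :=
  stmt14_general ξ B hξ hB β hβ l hl i t
end
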